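/- Let U be a commutative K-algebra and ∂₁,…,∂ₙ pairwise commuting K-linear derivations of U. On A = (Fin n → U) define two bilinear multiplications by (u∂ᵢ)∘(v∂ⱼ) = v·∂ⱼ(u)·∂ᵢ and (u∂ᵢ)∗(v∂ⱼ) = ∂ᵢ(u)·v·∂ⱼ (i.e., (f∘g)ᵢ = Σⱼ gⱼ·∂ⱼ(fᵢ) and f∗g = (Σᵢ ∂ᵢ(fᵢ))·g). Then for all a,b,c ∈ A the following five identities hold: (1) a∘(b∘c) − (a∘b)∘c − a∘(c∘b) + (a∘c)∘b = 0; (2) a∗(b∗c) − b∗(a∗c) = 0; (3) a∘(b∗c) − b∗(a∘c) = 0; (4) (a∗b − b∗a − a∘b + b∘a)∗c = 0; (5) (a∘b − b∘a)∗c + a∗(c∘b) − (a∗c)∘b − b∗(c∘a) + (b∗c)∘a = 0. -/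

import Mathlib

open Finset

/-- The multiplication `(u∂ᵢ)∘(v∂ⱼ) = v·∂ⱼ(u)·∂ᵢ`, i.e. `(f∘g)ᵢ = Σⱼ gⱼ·∂ⱼ(fᵢ)`. -/
def wittMul {K U : Type*} [CommRing K] [CommRing U] [Algebra K U]
    (n : ℕ) (D : Fin n → U →ₗ[K] U) (f g : Fin n → U) : Fin n → U :=
  fun i => ∑ j, g j * D j (f i)

/-- The second multiplication `(u∂ᵢ)∗(v∂ⱼ) = ∂ᵢ(u)·v·∂ⱼ`, i.e.
`f∗g = (Σᵢ ∂ᵢ(fᵢ))·g`. -/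
def wittStar {K U : Type*} [CommRing K] [CommRing U] [Algebra K U]
    (n : ℕ) (D : Fin n → U →ₗ[K] U) (f g : Fin n → U) : Fin n → U :=
  fun j => (∑ i, D i (f i)) * g j

/-!
Write `∂_g = Σⱼ gⱼ∂ⱼ` for the derivation of `U` attached to `g` and `div f = Σᵢ ∂ᵢ fᵢ`, so that
`(f∘g)ᵢ = ∂_g fᵢ` and `f∗g = (div f)·g`. Identities (2) and (3) only use that `∗` is scalar
multiplication by `div`. Because the `∂ᵢ` commute, `[∂_b, ∂_c] = ∂_{c∘b - b∘c}`, which is (1).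
The Jacobian term `Σᵢⱼ ∂ᵢbⱼ·∂ⱼaᵢ` of `div (a∘b)` is symmetric in `a, b`, so
`div (a∘b - b∘a) = ∂_b (div a) - ∂_a (div b)`; with the Leibniz rules
`div (u·g) = ∂_g u + u·div g` and `∂_b (u·v) = ∂_b u·v + u·∂_b v` this gives (4) and (5).
-/

section

variable {K U : Type*} [CommRing K] [CommRing U] [Algebra K U] {n : ℕ} (D : Fin n → U →ₗ[K] U)

def fieldDeriv (g : Fin n → U) (u : U) : U := ∑ j, g j * D j u

def divergence (f : Fin n → U) : U := ∑ i, D i (f i)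

theorem wittMul_apply (f g : Fin n → U) (i : Fin n) :
    wittMul n D f g i = fieldDeriv D g (f i) := rfl

theorem wittStar_eq_smul (f g : Fin n → U) : wittStar n D f g = divergence D f • g := rfl

theorem fieldDeriv_smul (u : U) (g : Fin n → U) (v : U) :
    fieldDeriv D (u • g) v = u * fieldDeriv D g v := by
  simp only [fieldDeriv, Pi.smul_apply, smul_eq_mul, mul_sum, mul_assoc]

theorem fieldDeriv_sub (g h : Fin n → U) (u : U) :
    fieldDeriv D (g - h) u = fieldDeriv D g u - fieldDeriv D h u := by
  simp only [fieldDeriv, Pi.sub_apply, sub_mul, sum_sub_distrib]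

theorem fieldDeriv_mul (hleib : ∀ i u v, D i (u * v) = D i u * v + u * D i v)
    (g : Fin n → U) (u v : U) :
    fieldDeriv D g (u * v) = fieldDeriv D g u * v + u * fieldDeriv D g v := by
  simp only [fieldDeriv, hleib, mul_add, sum_add_distrib, sum_mul, mul_sum]
  congr 1 <;> exact sum_congr rfl fun _ _ => by ring

theorem divergence_sub (f g : Fin n → U) :
    divergence D (f - g) = divergence D f - divergence D g := by
  simp only [divergence, Pi.sub_apply, map_sub, sum_sub_distrib]

theorem divergence_smul (hleib : ∀ i u v, D i (u * v) = D i u * v + u * D i v)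
    (u : U) (g : Fin n → U) :
    divergence D (u • g) = fieldDeriv D g u + u * divergence D g := by
  simp only [divergence, fieldDeriv, Pi.smul_apply, smul_eq_mul, hleib, sum_add_distrib, mul_sum]
  congr 1
  exact sum_congr rfl fun _ _ => mul_comm _ _

theorem fieldDeriv_fieldDeriv
    (hleib : ∀ i u v, D i (u * v) = D i u * v + u * D i v)
    (b c : Fin n → U) (u : U) :
    fieldDeriv D b (fieldDeriv D c u) =
      fieldDeriv D (wittMul n D c b) u + ∑ j, ∑ k, b j * c k * D j (D k u) := by
  simp only [fieldDeriv, wittMul, map_sum, hleib, mul_add, sum_add_distrib, sum_mul, mul_sum]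
  congr 1
  · rw [sum_comm]
    exact sum_congr rfl fun _ _ => sum_congr rfl fun _ _ => by ring
  · exact sum_congr rfl fun _ _ => sum_congr rfl fun _ _ => by ring

theorem fieldDeriv_commutator
    (hleib : ∀ i u v, D i (u * v) = D i u * v + u * D i v)
    (hcomm : ∀ i j u, D i (D j u) = D j (D i u))
    (b c : Fin n → U) (u : U) :
    fieldDeriv D b (fieldDeriv D c u) - fieldDeriv D c (fieldDeriv D b u) =
      fieldDeriv D (wittMul n D c b - wittMul n D b c) u := by
  have hsymm : ∑ j, ∑ k, b j * c k * D j (D k u) = ∑ j, ∑ k, c j * b k * D j (D k u) := by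
    rw [sum_comm]
    exact sum_congr rfl fun _ _ => sum_congr rfl fun _ _ => by rw [hcomm, mul_comm (b _)]
  rw [fieldDeriv_fieldDeriv D hleib, fieldDeriv_fieldDeriv D hleib, hsymm, fieldDeriv_sub]
  ring

theorem divergence_wittMul
    (hleib : ∀ i u v, D i (u * v) = D i u * v + u * D i v)
    (hcomm : ∀ i j u, D i (D j u) = D j (D i u))
    (a b : Fin n → U) :
    divergence D (wittMul n D a b) =
      fieldDeriv D b (divergence D a) + ∑ i, ∑ j, D i (b j) * D j (a i) := by
  simp only [divergence, fieldDeriv, wittMul, map_sum, hleib, sum_add_distrib, mul_sum]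
  rw [add_comm, sum_comm (f := fun i j => b j * D i (D j (a i)))]
  simp only [hcomm]

theorem divergence_wittMul_sub
    (hleib : ∀ i u v, D i (u * v) = D i u * v + u * D i v)
    (hcomm : ∀ i j u, D i (D j u) = D j (D i u))
    (a b : Fin n → U) :
    divergence D (wittMul n D a b - wittMul n D b a) =
      fieldDeriv D b (divergence D a) - fieldDeriv D a (divergence D b) := by
  have hsymm : ∑ i, ∑ j, D i (b j) * D j (a i) = ∑ i, ∑ j, D i (a j) * D j (b i) := by
    rw [sum_comm]
    exact sum_congr rfl fun _ _ => sum_congr rfl fun _ _ => mul_comm _ _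
  rw [divergence_sub, divergence_wittMul D hleib hcomm, divergence_wittMul D hleib hcomm, hsymm]
  ring

theorem wittMul_associator_symm
    (hleib : ∀ i u v, D i (u * v) = D i u * v + u * D i v)
    (hcomm : ∀ i j u, D i (D j u) = D j (D i u))
    (a b c : Fin n → U) :
    wittMul n D a (wittMul n D b c) - wittMul n D (wittMul n D a b) c =
      wittMul n D a (wittMul n D c b) - wittMul n D (wittMul n D a c) b := by
  funext i
  simp only [Pi.sub_apply, wittMul_apply]
  linear_combination fieldDeriv_commutator D hleib hcomm b c (a i) +
    fieldDeriv_sub D (wittMul n D c b) (wittMul n D b c) (a i)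

theorem wittStar_left_comm (a b c : Fin n → U) :
    wittStar n D a (wittStar n D b c) = wittStar n D b (wittStar n D a c) := by
  simp only [wittStar_eq_smul]
  exact smul_comm _ _ _

theorem wittMul_wittStar_left (a b c : Fin n → U) :
    wittMul n D a (wittStar n D b c) = wittStar n D b (wittMul n D a c) := by
  funext i
  simp only [wittMul_apply, wittStar_eq_smul, fieldDeriv_smul, Pi.smul_apply, smul_eq_mul]

theorem wittMul_wittStar_right
    (hleib : ∀ i u v, D i (u * v) = D i u * v + u * D i v)
    (a b c : Fin n → U) :
    wittMul n D (wittStar n D a c) b =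
      wittStar n D a (wittMul n D c b) + fieldDeriv D b (divergence D a) • c := by
  funext i
  simp only [wittMul_apply, wittStar_eq_smul, Pi.add_apply, Pi.smul_apply, smul_eq_mul,
    fieldDeriv_mul D hleib]
  ring

theorem divergence_wittStar_sub
    (hleib : ∀ i u v, D i (u * v) = D i u * v + u * D i v)
    (hcomm : ∀ i j u, D i (D j u) = D j (D i u))
    (a b : Fin n → U) :
    divergence D (wittStar n D a b - wittStar n D b a) =
      divergence D (wittMul n D a b - wittMul n D b a) := by
  rw [divergence_wittMul_sub D hleib hcomm, divergence_sub, wittStar_eq_smul, wittStar_eq_smul,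
    divergence_smul D hleib, divergence_smul D hleib]
  ring

end

theorem wittMul_wittStar_identities
    {K U : Type*} [CommRing K] [CommRing U] [Algebra K U]
    (n : ℕ) (D : Fin n → U →ₗ[K] U)
    (hleib : ∀ (i : Fin n) (u v : U), D i (u * v) = D i u * v + u * D i v)
    (hcomm : ∀ (i j : Fin n) (u : U), D i (D j u) = D j (D i u)) :
    ∀ a b c : Fin n → U,
      (wittMul n D a (wittMul n D b c) - wittMul n D (wittMul n D a b) c
        - wittMul n D a (wittMul n D c b) + wittMul n D (wittMul n D a c) b = 0) ∧
      (wittStar n D a (wittStar n D b c) - wittStar n D b (wittStar n D a c) = 0) ∧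
      (wittMul n D a (wittStar n D b c) - wittStar n D b (wittMul n D a c) = 0) ∧
      (wittStar n D (wittStar n D a b - wittStar n D b a
        - wittMul n D a b + wittMul n D b a) c = 0) ∧
      (wittStar n D (wittMul n D a b - wittMul n D b a) c
        + wittStar n D a (wittMul n D c b) - wittMul n D (wittStar n D a c) b
        - wittStar n D b (wittMul n D c a) + wittMul n D (wittStar n D b c) a = 0) := by
  intro a b c
  refine ⟨?_, ?_, ?_, ?_, ?_⟩
  · linear_combination wittMul_associator_symm D hleib hcomm a b c
  · exact sub_eq_zero.mpr (wittStar_left_comm D a b c)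
  · exact sub_eq_zero.mpr (wittMul_wittStar_left D a b c)
  · rw [wittStar_eq_smul, sub_add, divergence_sub, divergence_wittStar_sub D hleib hcomm, sub_self,
      zero_smul]
  · rw [wittMul_wittStar_right D hleib, wittMul_wittStar_right D hleib, wittStar_eq_smul,
      divergence_wittMul_sub D hleib hcomm]
    module
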